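/- arXiv:1111.5903 — 2 statements merged into one kernel-verified Lean document; each statement's English description precedes it below -/
import Mathlib

section
/- Let x(t) = c - ln(t)/ln(2) for some constant c. Then for every t in (0,T], the integral from 0 to t/2 of x(s) ds minus the integral from t/2 to t of x(s) ds equals t. -/
open MeasureTheory Real Set

theorem integral_const_sub_log_div (c L a b : ℝ) :
    ∫ s in a..b, (c - log s / L) = c * (b - a) - (b * log b - a * log a - b + a) / L := by
  rw [intervalIntegral.integral_sub intervalIntegrable_const
      (intervalIntegral.intervalIntegrable_log'.div_const L),
    intervalIntegral.integral_div, integral_log, intervalIntegral.integral_const, smul_eq_mul]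
  ring

theorem stmt_0_general (T c : ℝ) (x : ℝ → ℝ)
    (hx : ∀ t, x t = c - Real.log t / Real.log 2) :
    ∀ t ∈ Set.Ioc (0 : ℝ) T,
      (∫ s in Set.Ioc (0 : ℝ) (t / 2), x s) - (∫ s in Set.Ioc (t / 2) t, x s) = t := by
  rintro t ⟨ht, -⟩
  rw [← intervalIntegral.integral_of_le (by positivity),
    ← intervalIntegral.integral_of_le (by linarith),
    funext hx, integral_const_sub_log_div, integral_const_sub_log_div,
    log_div ht.ne' two_ne_zero]
  have hlog2 : log 2 ≠ 0 := (log_pos one_lt_two).ne'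
  field_simp
  ring

/-- The function `x(t) = c - ln t / ln 2` solves the Volterra equation
`∫₀^{t/2} x(s) ds - ∫_{t/2}^t x(s) ds = t` for every `t ∈ (0, T]`. -/
theorem stmt_0 (T c : ℝ) (hT : 0 < T) (x : ℝ → ℝ)
    (hx : ∀ t, x t = c - Real.log t / Real.log 2) :
    ∀ t ∈ Set.Ioc (0 : ℝ) T,
      (∫ s in Set.Ioc (0 : ℝ) (t / 2), x s) - (∫ s in Set.Ioc (t / 2) t, x s) = t :=
  stmt_0_general T c x hx
end

section
/- Under conditions A and B, for every natural number j the multiplicity r_j of the root λ = 1 of the j-th equation P_j(λ) = K_n(0,0) + Σ_{i=1}^{n-1} α_i^{1+j}(K_i(0,0) − K_{i+1}(0,0)) λ^{a_i} = 0 satisfies r_j ≤ n − 1. That is, if L(j) = 0 and Σ_{i=1}^{n-1} α_i^{1+j}(K_i(0,0) − K_{i+1}(0,0)) a_i^l = 0 for l = 1,...,n−1, then K_n(0,0) = 0, contradicting K_n(0,0) ≠ 0. -/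
/-!
Summation by parts turns `L(j)` into `K_n + Σ_{i<n} αᵢ^{1+j} (Kᵢ - K_{i+1})`, since `α₀ = 0` and
`α_n = 1`. The other `n - 1` equations form a Vandermonde system in the nodes `aᵢ = ln αᵢ`,
which are distinct and nonzero because `0 < α₁ < ⋯ < α_{n-1} < 1`; hence every coefficient
`αᵢ^{1+j} (Kᵢ - K_{i+1})` vanishes, and `L(j) = 0` leaves `K_n = 0`.
-/

open Finset

theorem Finset.sum_Icc_mul_sub_by_parts {R : Type*} [CommRing R] (K b : ℕ → R) {n : ℕ} (hn : 1 ≤ n) :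
    ∑ i ∈ Icc 1 n, K i * (b i - b (i - 1)) =
      K n * b n - K 1 * b 0 + ∑ i ∈ Icc 1 (n - 1), b i * (K i - K (i + 1)) := by
  induction n, hn using Nat.le_induction with
  | base => simp [mul_sub]
  | succ n hn ih =>
    obtain ⟨m, rfl⟩ : ∃ m, n = m + 1 := ⟨n - 1, by omega⟩
    rw [sum_Icc_succ_top (by omega), ih, Nat.add_sub_cancel, Nat.add_sub_cancel,
      sum_Icc_succ_top (by omega : 1 ≤ m + 1)]
    ring

theorem Finset.eq_zero_of_sum_mul_pow_eq_zero {ι R : Type*} [CommRing R] [IsDomain R]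
    {s : Finset ι} {c x : ι → R} (hx : Set.InjOn x s) (hx0 : ∀ i ∈ s, x i ≠ 0)
    (h : ∀ l ∈ Icc 1 #s, ∑ i ∈ s, c i * x i ^ l = 0) : ∀ i ∈ s, c i = 0 := by
  set e := s.equivFin
  have hinj : Function.Injective (x ∘ (↑) ∘ e.symm) := fun p q hpq =>
    e.symm.injective (Subtype.ext (hx (e.symm p).2 (e.symm q).2 hpq))
  have hv : (fun p => c (e.symm p) * x (e.symm p)) = 0 := by
    refine Matrix.eq_zero_of_forall_pow_sum_mul_pow_eq_zero hinj fun l => ?_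
    have hl := h (l + 1) (mem_Icc.mpr ⟨by omega, l.2⟩)
    rw [← sum_coe_sort, ← e.symm.sum_comp] at hl
    simpa only [Function.comp_apply, pow_succ', mul_assoc] using hl
  intro i hi
  have hi' := congrFun hv (e ⟨i, hi⟩)
  simp only [Equiv.symm_apply_apply, Pi.zero_apply] at hi'
  exact (mul_eq_zero.mp hi').resolve_right (hx0 i hi)

theorem stmt_8_general (n : ℕ) (j : ℕ)
    (α : ℕ → ℝ) (hα0 : α 0 = 0) (hαn : α n = 1)
    (hαmono : ∀ i < n, α i < α (i + 1))
    (a : ℕ → ℝ) (ha : ∀ i, a i = Real.log (α i))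
    (K : ℕ → ℝ) (hKn : K n ≠ 0)
    (hL : ∑ i ∈ Finset.Icc 1 n, K i * (α i ^ (1 + j) - α (i - 1) ^ (1 + j)) = 0)
    (hsys : ∀ l ∈ Finset.Icc 1 (n - 1),
      ∑ i ∈ Finset.Icc 1 (n - 1), α i ^ (1 + j) * (K i - K (i + 1)) * a i ^ l = 0) :
    False := by
  have hn : 1 ≤ n := Nat.one_le_iff_ne_zero.mpr fun h => by simp [h, hα0] at hαn
  have hmono : StrictMonoOn α (Set.Iic n) := strictMonoOn_Iic_of_lt_succ hαmono
  have hIic : ∀ i ∈ Icc 1 (n - 1), i ∈ Set.Iic n := fun i hi =>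
    Set.mem_Iic.mpr ((mem_Icc.mp hi).2.trans (n.sub_le 1))
  have hbounds : ∀ i ∈ Icc 1 (n - 1), 0 < α i ∧ α i < 1 := fun i hi => by
    obtain ⟨hi1, hin⟩ := mem_Icc.mp hi
    exact ⟨hα0 ▸ hmono (Set.mem_Iic.mpr n.zero_le) (hIic i hi) (by omega),
      hαn ▸ hmono (hIic i hi) Set.self_mem_Iic (by omega)⟩
  have hcoef : ∀ i ∈ Icc 1 (n - 1), α i ^ (1 + j) * (K i - K (i + 1)) = 0 := by
    refine eq_zero_of_sum_mul_pow_eq_zero (x := a) (fun i hi k hk hik => ?_)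
      (fun i hi => ?_) (by simpa using hsys)
    · rw [ha, ha] at hik
      have hαik := Real.log_injOn_pos (hbounds i hi).1 (hbounds k hk).1 hik
      exact hmono.injOn (hIic i hi) (hIic k hk) hαik
    · rw [ha]
      exact (Real.log_neg (hbounds i hi).1 (hbounds i hi).2).ne
  rw [sum_Icc_mul_sub_by_parts K _ hn, sum_eq_zero hcoef, hα0, hαn] at hL
  exact hKn (by simpa using hL)

/-- The multiplicity of the root `λ = 1` of the `j`-th characteristic equation is at most
`n - 1`: if `L(j) = Σ_{i=1}^n Kᵢ(αᵢ^{1+j} - α_{i-1}^{1+j}) = 0` and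
`Σ_{i=1}^{n-1} αᵢ^{1+j}(Kᵢ - K_{i+1}) aᵢˡ = 0` for `l = 1,…,n-1` (with `aᵢ = ln αᵢ`),
then `K_n = 0`, contradicting `K_n ≠ 0`. -/
theorem stmt_8 (n : ℕ) (hn : 1 ≤ n) (j : ℕ)
    (α : ℕ → ℝ) (hα0 : α 0 = 0) (hαn : α n = 1)
    (hαmono : ∀ i < n, α i < α (i + 1)) (hαpos : ∀ i ∈ Finset.Icc 1 (n - 1), 0 < α i)
    (a : ℕ → ℝ) (ha : ∀ i, a i = Real.log (α i))
    (K : ℕ → ℝ) (hKn : K n ≠ 0)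
    (hL : ∑ i ∈ Finset.Icc 1 n, K i * (α i ^ (1 + j) - α (i - 1) ^ (1 + j)) = 0)
    (hsys : ∀ l ∈ Finset.Icc 1 (n - 1),
      ∑ i ∈ Finset.Icc 1 (n - 1), α i ^ (1 + j) * (K i - K (i + 1)) * a i ^ l = 0) :
    False :=
  stmt_8_general n j α hα0 hαn hαmono a ha K hKn hL hsys
end
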